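/- arXiv:1401.2090 — 6 statements merged into one kernel-verified Lean document; each statement's English description precedes it below -/
import Mathlib

section
/- Let K be an n×n Hermitian positive-definite matrix and K' the matrix of entrywise absolute values of K. If K' is irreducible and there exists a cycle a_0, a_1, ..., a_m = a_0 (with a_l ≠ a_{l+1} and K_{a_l a_{l+1}} ≠ 0) such that the product K_{a_0 a_1} K_{a_1 a_2} ··· K_{a_{m-1} a_0} is not a positive real number, then the largest eigenvalue of K' is strictly greater than the largest eigenvalue of K. -/
/-!
Let `u` be a top eigenvector of `K`, with eigenvalue `λ`, and `|u|` its entrywise modulus. Then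
`λ ‖u‖² = Re ⟪u, K u⟫ ≤ ⟪|u|, K' |u|⟫ ≤ λ' ‖u‖²`. If `λ' ≤ λ`, both inequalities are equalities.
Equality on the right makes `|u|` an eigenvector of `K'`, hence strictly positive by
irreducibility; equality on the left makes every `conj (u a) * K a b * u b` a nonnegative real.
Along the cycle the phases of `u` cancel, so the product of the `K`-entries is a positive real.
-/

open Matrix
open scoped ComplexOrder

theorem Matrix.algebraMap_mulVec {n R α : Type*} [Fintype n] [DecidableEq n] [CommSemiring R]
    [Semiring α] [Algebra R α] (r : R) (x : n → α) :
    algebraMap R (Matrix n n α) r *ᵥ x = r • x := by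
  rw [Algebra.algebraMap_eq_smul_one, smul_mulVec, one_mulVec]

theorem Matrix.dotProduct_mulVec_eq_sum {n R : Type*} [Fintype n] [Semiring R]
    (A : Matrix n n R) (x y : n → R) : x ⬝ᵥ A *ᵥ y = ∑ a, ∑ b, x a * A a b * y b := by
  simp only [dotProduct, mulVec, Finset.mul_sum, mul_assoc]

theorem Matrix.dotProduct_algebraMap_sub_mulVec {n 𝕜 : Type*} [Fintype n] [DecidableEq n]
    [RCLike 𝕜] (A : Matrix n n 𝕜) (μ : ℝ) (x y : n → 𝕜) :
    y ⬝ᵥ (algebraMap ℝ (Matrix n n 𝕜) μ - A) *ᵥ x = (μ : 𝕜) * (y ⬝ᵥ x) - y ⬝ᵥ A *ᵥ x := by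
  rw [sub_mulVec, dotProduct_sub, algebraMap_mulVec, RCLike.real_smul_eq_coe_smul (K := 𝕜),
    dotProduct_smul, smul_eq_mul]

namespace Matrix.IsHermitian

variable {n 𝕜 : Type*} [Fintype n] [DecidableEq n] [RCLike 𝕜] {A : Matrix n n 𝕜}
  (hA : A.IsHermitian) {μ : ℝ} (hμ : ∀ i, hA.eigenvalues i ≤ μ)
include hμ

open scoped MatrixOrder in
theorem posSemidef_algebraMap_sub : (algebraMap ℝ (Matrix n n 𝕜) μ - A).PosSemidef := by
  rw [← Matrix.le_iff, le_algebraMap_iff_spectrum_le hA.isSelfAdjoint,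
    hA.spectrum_real_eq_range_eigenvalues]
  rintro _ ⟨i, rfl⟩
  exact hμ i

theorem star_dotProduct_mulVec_le (x : n → 𝕜) :
    star x ⬝ᵥ A *ᵥ x ≤ (μ : 𝕜) * (star x ⬝ᵥ x) := by
  have := (hA.posSemidef_algebraMap_sub hμ).dotProduct_mulVec_nonneg x
  rwa [dotProduct_algebraMap_sub_mulVec, sub_nonneg] at this

theorem mulVec_eq_smul_of_star_dotProduct_mulVec_eq {x : n → 𝕜}
    (hx : star x ⬝ᵥ A *ᵥ x = (μ : 𝕜) * (star x ⬝ᵥ x)) : A *ᵥ x = (μ : 𝕜) • x := by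
  have := ((hA.posSemidef_algebraMap_sub hμ).dotProduct_mulVec_zero_iff x).1 <| by
    rw [dotProduct_algebraMap_sub_mulVec, hx, sub_self]
  rwa [sub_mulVec, algebraMap_mulVec, RCLike.real_smul_eq_coe_smul (K := 𝕜), sub_eq_zero,
    eq_comm] at this

end Matrix.IsHermitian

theorem Matrix.pow_mulVec_eq_smul {n R : Type*} [Fintype n] [DecidableEq n] [CommSemiring R]
    {A : Matrix n n R} {μ : R} {w : n → R} (hw : A *ᵥ w = μ • w) (p : ℕ) :
    (A ^ p) *ᵥ w = μ ^ p • w := by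
  induction p with
  | zero => simp
  | succ p ih => rw [pow_succ, ← mulVec_mulVec, hw, mulVec_smul, ih, smul_smul, pow_succ']

theorem Matrix.pos_of_mulVec_eq_smul {n R : Type*} [Fintype n] [DecidableEq n] [CommRing R]
    [LinearOrder R] [IsStrictOrderedRing R] {A : Matrix n n R} (hA : ∀ a b, 0 ≤ A a b)
    (hirr : ∀ a b, ∃ p : ℕ, 0 < (A ^ p) a b) {μ : R} {w : n → R} (hw : A *ᵥ w = μ • w)
    (hw₀ : ∀ a, 0 ≤ w a) {b : n} (hb : 0 < w b) (a : n) : 0 < w a := by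
  obtain ⟨p, hp⟩ := hirr a b
  have hsum : 0 < ((A ^ p) *ᵥ w) a :=
    Finset.sum_pos' (fun c _ => mul_nonneg (pow_apply_nonneg hA p a c) (hw₀ c))
      ⟨b, Finset.mem_univ b, mul_pos hp hb⟩
  rw [pow_mulVec_eq_smul hw, Pi.smul_apply, smul_eq_mul] at hsum
  exact (hw₀ a).lt_of_ne fun h => by simp [← h] at hsum

theorem Finset.prod_range_succ_eq_of_eq {M : Type*} [CommMonoid M] {g : ℕ → M} {m : ℕ}
    (hg : g m = g 0) : ∏ l ∈ range m, g (l + 1) = ∏ l ∈ range m, g l := by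
  cases m with
  | zero => rfl
  | succ k => rw [prod_range_succ, prod_range_succ', hg]

/-- Gauge invariance of cycle products. -/
theorem Finset.prod_range_star_mul_mul_succ {R : Type*} [CommMonoid R] [StarMul R]
    (g c : ℕ → R) {m : ℕ} (hg : g m = g 0) :
    ∏ l ∈ range m, star (g l) * c l * g (l + 1) =
      (∏ l ∈ range m, c l) * (star (∏ l ∈ range m, g l) * ∏ l ∈ range m, g l) := by
  rw [prod_mul_distrib, prod_mul_distrib, prod_range_succ_eq_of_eq hg, star_prod]
  ac_rfl

namespace Complex

theorem sum_re_eq_sum_norm_iff {ι : Type*} (s : Finset ι) (z : ι → ℂ) :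
    ∑ i ∈ s, (z i).re = ∑ i ∈ s, ‖z i‖ ↔ ∀ i ∈ s, 0 ≤ z i := by
  simp only [Finset.sum_eq_sum_iff_of_le fun i _ => re_le_norm (z i), re_eq_norm]

section

variable {n : Type*} [Fintype n] (K : Matrix n n ℂ) (u : n → ℂ)

theorem re_star_dotProduct_self : (star u ⬝ᵥ u).re = (‖u ·‖) ⬝ᵥ (‖u ·‖) := by
  simp only [dotProduct, re_sum, Pi.star_apply, star_def, conj_mul', sq, ← ofReal_mul, ofReal_re]

theorem re_star_dotProduct_mulVec_eq_sum :
    (star u ⬝ᵥ K *ᵥ u).re = ∑ p : n × n, (star (u p.1) * K p.1 p.2 * u p.2).re := by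
  rw [dotProduct_mulVec_eq_sum, re_sum, Fintype.sum_prod_type]
  simp only [re_sum, Pi.star_apply]

theorem norm_dotProduct_map_norm_mulVec_eq_sum :
    (‖u ·‖) ⬝ᵥ K.map (‖·‖) *ᵥ (‖u ·‖) = ∑ p : n × n, ‖star (u p.1) * K p.1 p.2 * u p.2‖ := by
  rw [dotProduct_mulVec_eq_sum, Fintype.sum_prod_type]
  simp only [map_apply, norm_mul, norm_star]

theorem re_star_dotProduct_mulVec_le_map_norm :
    (star u ⬝ᵥ K *ᵥ u).re ≤ (‖u ·‖) ⬝ᵥ K.map (‖·‖) *ᵥ (‖u ·‖) := by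
  rw [re_star_dotProduct_mulVec_eq_sum, norm_dotProduct_map_norm_mulVec_eq_sum]
  exact Finset.sum_le_sum fun p _ => re_le_norm _

theorem star_mul_mul_nonneg_of_re_star_dotProduct_mulVec_eq
    (h : (star u ⬝ᵥ K *ᵥ u).re = (‖u ·‖) ⬝ᵥ K.map (‖·‖) *ᵥ (‖u ·‖)) (a b : n) :
    0 ≤ star (u a) * K a b * u b := by
  rw [re_star_dotProduct_mulVec_eq_sum, norm_dotProduct_map_norm_mulVec_eq_sum,
    sum_re_eq_sum_norm_iff] at h
  exact h (a, b) (Finset.mem_univ _)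

end

theorem prod_pos_of_star_mul_mul_nonneg {n : Type*} {K : Matrix n n ℂ} {u : n → ℂ}
    (hz : ∀ a b, 0 ≤ star (u a) * K a b * u b) (hu : ∀ a, u a ≠ 0) {m : ℕ} {α : ℕ → n}
    (hα : α m = α 0) (hK : ∀ l < m, K (α l) (α (l + 1)) ≠ 0) :
    0 < ∏ l ∈ Finset.range m, K (α l) (α (l + 1)) := by
  have hgauge : 0 < ∏ l ∈ Finset.range m, star (u (α l)) * K (α l) (α (l + 1)) * u (α (l + 1)) :=
    Finset.prod_pos fun l hl => (hz _ _).lt_of_ne' <|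
      mul_ne_zero (mul_ne_zero (star_ne_zero.2 (hu _)) (hK l (Finset.mem_range.1 hl))) (hu _)
  have hP : 0 < star (∏ l ∈ Finset.range m, u (α l)) * ∏ l ∈ Finset.range m, u (α l) :=
    star_mul_self_pos (.of_ne_zero (Finset.prod_ne_zero_iff.2 fun l _ => hu (α l)))
  rw [Finset.prod_range_star_mul_mul_succ (fun l => u (α l)) (fun l => K (α l) (α (l + 1)))
    (congrArg u hα)] at hgauge
  simpa only [mul_inv_cancel_right₀ hP.ne'] using mul_pos hgauge (inv_pos.2 hP)

end Complex

/-- Strict diamagnetic inequality: `K` Hermitian positive definite, `K'` its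
entrywise absolute value.  If `K'` is irreducible and there is a cycle whose
product of entries of `K` is not a positive real number, then the largest
eigenvalue of `K'` is strictly greater than that of `K`. -/
theorem strict_diamagnetic_inequality
    (n : ℕ) (hn : 0 < n)
    (K : Matrix (Fin n) (Fin n) ℂ) (hK : K.PosDef)
    (K' : Matrix (Fin n) (Fin n) ℝ) (hK' : K'.IsHermitian)
    (habs : ∀ a b, K' a b = ‖K a b‖)
    (hirr : ∀ a b, ∃ p : ℕ, 0 < (K' ^ p) a b)
    (hcycle : ∃ (m : ℕ) (α : ℕ → Fin n), 0 < m ∧ α m = α 0 ∧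
      (∀ l < m, α l ≠ α (l + 1)) ∧ (∀ l < m, K (α l) (α (l + 1)) ≠ 0) ∧
      ¬ ∃ r : ℝ, 0 < r ∧ (∏ l ∈ Finset.range m, K (α l) (α (l + 1))) = (r : ℂ)) :
    haveI : Nonempty (Fin n) := Fin.pos_iff_nonempty.mp hn
    (⨆ i, hK.1.eigenvalues i) < ⨆ i, hK'.eigenvalues i := by
  have : Nonempty (Fin n) := Fin.pos_iff_nonempty.mp hn
  obtain rfl : K' = K.map (‖·‖) := Matrix.ext habs
  obtain ⟨i₀, hi₀⟩ := exists_eq_ciSup_of_finite (f := hK.1.eigenvalues)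
  show _ < _
  rw [← hi₀]
  by_contra! hle
  have hμ i : hK'.eigenvalues i ≤ hK.1.eigenvalues i₀ :=
    (le_ciSup (Finite.bddAbove_range _) i).trans hle
  set u := (hK.1.eigenvectorBasis i₀).ofLp
  have hK_form : (star u ⬝ᵥ K *ᵥ u).re = hK.1.eigenvalues i₀ * ((‖u ·‖) ⬝ᵥ (‖u ·‖)) := by
    rw [hK.1.mulVec_eigenvectorBasis, dotProduct_smul, Complex.real_smul, Complex.re_ofReal_mul,
      Complex.re_star_dotProduct_self]
  have htriangle := Complex.re_star_dotProduct_mulVec_le_map_norm K u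
  have hK'_form := hK'.star_dotProduct_mulVec_le hμ (‖u ·‖)
  simp only [star_trivial, RCLike.ofReal_real_eq_id, id] at hK'_form
  have hw := hK'.mulVec_eq_smul_of_star_dotProduct_mulVec_eq hμ (x := (‖u ·‖)) (by
    simp only [star_trivial, RCLike.ofReal_real_eq_id, id]; linarith)
  have hz := Complex.star_mul_mul_nonneg_of_re_star_dotProduct_mulVec_eq K u (by linarith)
  obtain ⟨b, hb⟩ : ∃ b, u b ≠ 0 := Function.ne_iff.1 <|
    mt (WithLp.ofLp_eq_zero 2).1 (hK.1.eigenvectorBasis.orthonormal.ne_zero i₀)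
  have hu a : u a ≠ 0 := norm_pos_iff.1 <|
    pos_of_mulVec_eq_smul (fun a b => norm_nonneg (K a b)) hirr hw (fun _ => norm_nonneg _)
      (norm_pos_iff.2 hb) a
  obtain ⟨m, α, -, hα, -, hKα, hnotpos⟩ := hcycle
  have hpos := Complex.prod_pos_of_star_mul_mul_nonneg hz hu hα hKα
  exact hnotpos ⟨_, (Complex.pos_iff.1 hpos).1, Complex.eq_re_of_ofReal_le hpos.le⟩
end

section
/- Let H and H' be n×n Hermitian matrices with identical diagonals, H'_{ab} = -|H_{ab}| for a ≠ b, and H'_{aa} = H_{aa}. Then the smallest eigenvalue of H' is at most the smallest eigenvalue of H. -/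
/-!
Let `v` be a unit eigenvector of `H` for its smallest eigenvalue, and let `|v|` be the vector of
entrywise moduli, again a unit vector. Comparing the quadratic forms term by term, the diagonal
terms agree and each off-diagonal term `-|v_a| |H_ab| |v_b|` of `|v|* H' |v|` is at most
`Re (conj v_a H_ab v_b)`. Hence `λ_min(H') ≤ |v|* H' |v| ≤ v* H v = λ_min(H)`.
-/

open Matrix

open scoped MatrixOrder

namespace Matrix

variable {𝕜 ι : Type*} [RCLike 𝕜] [Fintype ι]

namespace IsHermitian

variable [DecidableEq ι] {M : Matrix ι ι 𝕜}

theorem iInf_eigenvalues_le_re_dotProduct_mulVec (hM : M.IsHermitian) {x : ι → 𝕜}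
    (hx : star x ⬝ᵥ x = 1) :
    (⨅ i, hM.eigenvalues i) ≤ RCLike.re (star x ⬝ᵥ M *ᵥ x) := by
  set c := ⨅ i, hM.eigenvalues i
  have hcM : algebraMap ℝ _ c ≤ M := by
    rw [algebraMap_le_iff_le_spectrum hM.isSelfAdjoint, hM.spectrum_real_eq_range_eigenvalues]
    rintro _ ⟨i, rfl⟩
    exact ciInf_le (Finite.bddBelow_range _) i
  have h := (le_iff.mp hcM).re_dotProduct_nonneg x
  rw [sub_mulVec, dotProduct_sub, Algebra.algebraMap_eq_smul_one, smul_mulVec, one_mulVec,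
    dotProduct_smul, hx] at h
  simpa [sub_nonneg, RCLike.smul_re] using h

theorem exists_re_dotProduct_mulVec_eq_iInf_eigenvalues [Nonempty ι] (hM : M.IsHermitian) :
    ∃ v : ι → 𝕜, star v ⬝ᵥ v = 1 ∧ RCLike.re (star v ⬝ᵥ M *ᵥ v) = ⨅ i, hM.eigenvalues i := by
  obtain ⟨i, hi⟩ := exists_eq_ciInf_of_finite (f := hM.eigenvalues)
  refine ⟨hM.eigenvectorBasis i, ?_, by rw [← hM.eigenvalues_eq, hi]⟩
  rw [dotProduct_comm, ← EuclideanSpace.inner_eq_star_dotProduct, inner_self_eq_norm_sq_to_K,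
    hM.eigenvectorBasis.orthonormal.1 i]
  simp

end IsHermitian

theorem star_dotProduct_self_norm (v : ι → 𝕜) :
    star (fun a ↦ (‖v a‖ : 𝕜)) ⬝ᵥ (fun a ↦ (‖v a‖ : 𝕜)) = star v ⬝ᵥ v := by
  simp [dotProduct, RCLike.conj_mul, sq]

theorem re_star_dotProduct_mulVec_eq_sum (M : Matrix ι ι 𝕜) (x : ι → 𝕜) :
    RCLike.re (star x ⬝ᵥ M *ᵥ x) = ∑ a, ∑ b, RCLike.re (star (x a) * M a b * x b) := by
  simp only [dotProduct, mulVec, Finset.mul_sum, map_sum, Pi.star_apply, mul_assoc]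

theorem re_dotProduct_mulVec_norm_le {H H' : Matrix ι ι 𝕜}
    (hoff : ∀ a b, a ≠ b → H' a b = -(‖H a b‖ : 𝕜)) (hdiag : ∀ a, H' a a = H a a)
    (v : ι → 𝕜) :
    RCLike.re (star (fun a ↦ (‖v a‖ : 𝕜)) ⬝ᵥ H' *ᵥ fun a ↦ (‖v a‖ : 𝕜)) ≤
      RCLike.re (star v ⬝ᵥ H *ᵥ v) := by
  rw [re_star_dotProduct_mulVec_eq_sum, re_star_dotProduct_mulVec_eq_sum]
  refine Finset.sum_le_sum fun a _ ↦ Finset.sum_le_sum fun b _ ↦ ?_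
  rcases eq_or_ne a b with rfl | hab
  · refine le_of_eq (congrArg _ ?_)
    calc star (‖v a‖ : 𝕜) * H' a a * ‖v a‖ = H a a * (‖v a‖ : 𝕜) ^ 2 := by
          rw [hdiag, RCLike.star_def, RCLike.conj_ofReal]; ring
      _ = star (v a) * H a a * v a := by rw [← RCLike.conj_mul, RCLike.star_def]; ring
  · have hnorm : ‖star (v a) * H a b * v b‖ = ‖v a‖ * ‖H a b‖ * ‖v b‖ := by simp
    calc RCLike.re (star (‖v a‖ : 𝕜) * H' a b * ‖v b‖)
        = -‖star (v a) * H a b * v b‖ := by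
          rw [hnorm, hoff a b hab]
          simp only [RCLike.star_def, RCLike.conj_ofReal, mul_neg, neg_mul, map_neg]
          norm_cast
      _ ≤ RCLike.re (star (v a) * H a b * v b) := neg_le_of_abs_le (RCLike.abs_re_le_norm _)

end Matrix

/-- Natural inequality, abstract form: if `H'` has the same diagonal as the
Hermitian matrix `H` and off-diagonal entries `-|H_{ab}|`, then the smallest
eigenvalue of `H'` is at most the smallest eigenvalue of `H`. -/
theorem smallest_eigenvalue_neg_abs_le
    (n : ℕ) (hn : 0 < n)
    (H : Matrix (Fin n) (Fin n) ℂ) (hH : H.IsHermitian)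
    (H' : Matrix (Fin n) (Fin n) ℂ) (hH' : H'.IsHermitian)
    (hoff : ∀ a b, a ≠ b → H' a b = -(‖H a b‖ : ℂ))
    (hdiag : ∀ a, H' a a = H a a) :
    haveI : Nonempty (Fin n) := Fin.pos_iff_nonempty.mp hn
    (⨅ i, hH'.eigenvalues i) ≤ ⨅ i, hH.eigenvalues i := by
  have : Nonempty (Fin n) := Fin.pos_iff_nonempty.mp hn
  obtain ⟨v, hv1, hv⟩ := hH.exists_re_dotProduct_mulVec_eq_iInf_eigenvalues
  calc (⨅ i, hH'.eigenvalues i)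
      ≤ RCLike.re (star (fun a ↦ (‖v a‖ : ℂ)) ⬝ᵥ H' *ᵥ fun a ↦ (‖v a‖ : ℂ)) :=
        hH'.iInf_eigenvalues_le_re_dotProduct_mulVec ((star_dotProduct_self_norm v).trans hv1)
    _ ≤ RCLike.re (star v ⬝ᵥ H *ᵥ v) := re_dotProduct_mulVec_norm_le hoff hdiag v
    _ = ⨅ i, hH.eigenvalues i := hv
end

section
/- Define operators a_j = c_{2j-1} + √2 c_{2j} + c_{2j+1} and b_j = c_{2j} - √2 c_{2j+1} + c_{2j+2} in terms of bosonic creation/annihilation operators c_i satisfying [c_i, c_j†] = δ_{ij} (indices mod 2N). Then [a_i, b_j†] = 0 for all i, j. -/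
lemma comm_expand {A : Type*} [Ring A] [Algebra ℂ A] (r : ℂ)
    (x1 x2 x3 y1 y2 y3 : A) :
    (x1 + r • x2 + x3) * (y1 - r • y2 + y3)
      - (y1 - r • y2 + y3) * (x1 + r • x2 + x3)
    = (x1 * y1 - y1 * x1) - r • (x1 * y2 - y2 * x1) + (x1 * y3 - y3 * x1)
      + r • (x2 * y1 - y1 * x2) - (r * r) • (x2 * y2 - y2 * x2)
      + r • (x2 * y3 - y3 * x2)
      + (x3 * y1 - y1 * x3) - r • (x3 * y2 - y2 * x3) + (x3 * y3 - y3 * x3) := by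
  simp only [add_mul, mul_add, sub_mul, mul_sub, smul_mul_assoc, mul_smul_comm,
    smul_sub, smul_add, smul_smul]
  module

/-- Delta-chain operators: for bosonic operators `c_i`, `c_i†` (`i` mod `2N`)
with `[c_i, c_j†] = δ_{ij}`, the triangle operators
`a_j = c_{2j-1} + √2 c_{2j} + c_{2j+1}` commute with the valley creation
operators `b_j† = c_{2j}† - √2 c_{2j+1}† + c_{2j+2}†`. -/
theorem delta_chain_a_b_dagger_commute
    (N : ℕ) (hN : 0 < N)
    (A : Type*) [Ring A] [Algebra ℂ A]
    (c cd : ZMod (2 * N) → A)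
    (hccr : ∀ i j : ZMod (2 * N),
      c i * cd j - cd j * c i = if i = j then 1 else 0) :
    ∀ i j : ℤ,
      ((c ((2 * i - 1 : ℤ) : ZMod (2 * N))
          + (Real.sqrt 2 : ℂ) • c ((2 * i : ℤ) : ZMod (2 * N))
          + c ((2 * i + 1 : ℤ) : ZMod (2 * N))) *
        (cd ((2 * j : ℤ) : ZMod (2 * N))
          - (Real.sqrt 2 : ℂ) • cd ((2 * j + 1 : ℤ) : ZMod (2 * N))
          + cd ((2 * j + 2 : ℤ) : ZMod (2 * N))))
      - ((cd ((2 * j : ℤ) : ZMod (2 * N))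
          - (Real.sqrt 2 : ℂ) • cd ((2 * j + 1 : ℤ) : ZMod (2 * N))
          + cd ((2 * j + 2 : ℤ) : ZMod (2 * N))) *
        (c ((2 * i - 1 : ℤ) : ZMod (2 * N))
          + (Real.sqrt 2 : ℂ) • c ((2 * i : ℤ) : ZMod (2 * N))
          + c ((2 * i + 1 : ℤ) : ZMod (2 * N)))) = 0 := by
  intro i j
  rw [comm_expand]
  simp only [hccr]
  have hd : (2:ℤ) ∣ ((2*N : ℕ) : ℤ) := by push_cast; exact Dvd.intro _ rfl
  have par : ∀ a b : ℤ, a % 2 ≠ b % 2 → ¬ Int.ModEq ((2*N : ℕ) : ℤ) a b :=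
    fun a b hab h => hab (h.of_dvd hd)
  have h1 : ¬ ((2*i-1 : ℤ) : ZMod (2*N)) = ((2*j : ℤ) : ZMod (2*N)) := by
    rw [ZMod.intCast_eq_intCast_iff']; exact par _ _ (by omega)
  have h3 : ¬ ((2*i-1 : ℤ) : ZMod (2*N)) = ((2*j+2 : ℤ) : ZMod (2*N)) := by
    rw [ZMod.intCast_eq_intCast_iff']; exact par _ _ (by omega)
  have h5 : ¬ ((2*i : ℤ) : ZMod (2*N)) = ((2*j+1 : ℤ) : ZMod (2*N)) := by
    rw [ZMod.intCast_eq_intCast_iff']; exact par _ _ (by omega)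
  have h7 : ¬ ((2*i+1 : ℤ) : ZMod (2*N)) = ((2*j : ℤ) : ZMod (2*N)) := by
    rw [ZMod.intCast_eq_intCast_iff']; exact par _ _ (by omega)
  have h9 : ¬ ((2*i+1 : ℤ) : ZMod (2*N)) = ((2*j+2 : ℤ) : ZMod (2*N)) := by
    rw [ZMod.intCast_eq_intCast_iff']; exact par _ _ (by omega)
  have h2 : (((2*i-1 : ℤ) : ZMod (2*N)) = ((2*j+1 : ℤ) : ZMod (2*N)))
      ↔ (((2*i : ℤ) : ZMod (2*N)) = ((2*j+2 : ℤ) : ZMod (2*N))) := by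
    rw [ZMod.intCast_eq_intCast_iff', ZMod.intCast_eq_intCast_iff']
    constructor
    · intro h
      have h' := Int.ModEq.add_right 1 h
      rwa [show 2*i-1+1 = 2*i by ring, show 2*j+1+1 = 2*j+2 by ring] at h'
    · intro h
      have h' := Int.ModEq.sub_right 1 h
      rwa [show 2*i-1 = 2*i - 1 by ring, show 2*j+2-1 = 2*j+1 by ring] at h'
  have h4 : (((2*i+1 : ℤ) : ZMod (2*N)) = ((2*j+1 : ℤ) : ZMod (2*N)))
      ↔ (((2*i : ℤ) : ZMod (2*N)) = ((2*j : ℤ) : ZMod (2*N))) := by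
    rw [ZMod.intCast_eq_intCast_iff', ZMod.intCast_eq_intCast_iff']
    constructor
    · intro h
      have h' := Int.ModEq.sub_right 1 h
      rwa [show 2*i+1-1 = 2*i by ring, show 2*j+1-1 = 2*j by ring] at h'
    · intro h
      exact Int.ModEq.add_right 1 h
  rw [if_neg h1, if_neg h3, if_neg h5, if_neg h7, if_neg h9,
    if_congr h2 rfl rfl, if_congr h4 rfl rfl]
  by_cases hP : ((2*i : ℤ) : ZMod (2*N)) = ((2*j+2 : ℤ) : ZMod (2*N)) <;>
    by_cases hQ : ((2*i : ℤ) : ZMod (2*N)) = ((2*j : ℤ) : ZMod (2*N)) <;>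
      simp only [hP, hQ, if_true, if_false, eq_self_iff_true, if_neg, smul_zero] <;>
      module
end

section
/- In the single-particle sector, the delta-chain Hamiltonian H = Σ_{j=1}^{N} a_j† a_j with a_j = c_{2j-1} + √2 c_{2j} + c_{2j+1} (periodic, 2N sites) has a zero-energy eigenspace of dimension at least N, spanned by the linearly independent vectors v_j with components (v_j)_{2j} = 1, (v_j)_{2j+1} = -√2, (v_j)_{2j+2} = 1 and zero elsewhere. -/
open Matrix

/-- The `w`-vector of the delta chain: entries `1, √2, 1` at cyclic positions
`2j+1, 2j+2, 2j+3` (this is `a_{j+1}` of the paper, `j = 0,…,N-1`). -/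
noncomputable def deltaW (N : ℕ) [NeZero (2 * N)] (j : Fin N) : ZMod (2 * N) → ℝ :=
  fun s =>
    (if s = ((2 * (j : ℕ) + 1 : ℕ) : ZMod (2 * N)) then 1 else 0)
    + (if s = ((2 * (j : ℕ) + 2 : ℕ) : ZMod (2 * N)) then Real.sqrt 2 else 0)
    + (if s = ((2 * (j : ℕ) + 3 : ℕ) : ZMod (2 * N)) then 1 else 0)

/-- The valley vector of the delta chain: entries `1, -√2, 1` at cyclic
positions `2j+2, 2j+3, 2j+4`. -/
noncomputable def deltaV (N : ℕ) [NeZero (2 * N)] (j : Fin N) : ZMod (2 * N) → ℝ :=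
  fun s =>
    (if s = ((2 * (j : ℕ) + 2 : ℕ) : ZMod (2 * N)) then 1 else 0)
    + (if s = ((2 * (j : ℕ) + 3 : ℕ) : ZMod (2 * N)) then -Real.sqrt 2 else 0)
    + (if s = ((2 * (j : ℕ) + 4 : ℕ) : ZMod (2 * N)) then 1 else 0)

/-- The single-particle delta-chain Hamiltonian `M = Σ_j w_j w_j*`. -/
noncomputable def deltaChainMatrix (N : ℕ) [NeZero (2 * N)] :
    Matrix (ZMod (2 * N)) (ZMod (2 * N)) ℝ :=
  ∑ j : Fin N, Matrix.vecMulVec (deltaW N j) (deltaW N j)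

/-- Natural numbers of different parity have different images in `ZMod (2N)`. -/
lemma deltaParityNe (N : ℕ) [NeZero (2 * N)] (a b : ℕ) (h : a % 2 ≠ b % 2) :
    (a : ZMod (2 * N)) ≠ (b : ZMod (2 * N)) := by
  intro hab
  rw [ZMod.natCast_eq_natCast_iff] at hab
  exact h (hab.of_dvd ⟨N, rfl⟩)

/-- Each `w`-vector is orthogonal to each valley vector. -/
lemma deltaDotZero (N : ℕ) [NeZero (2 * N)] (i j : Fin N) :
    deltaW N i ⬝ᵥ deltaV N j = 0 := by
  classical
  simp only [deltaW, deltaV, dotProduct, add_mul, mul_add, Finset.sum_add_distrib,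
    ite_mul, mul_ite, zero_mul, mul_zero, Finset.sum_ite_eq', Finset.mem_univ, if_true]
  rw [if_neg (deltaParityNe N (2 * (j : ℕ) + 2) (2 * (i : ℕ) + 1) (by omega)),
    if_neg (deltaParityNe N (2 * (j : ℕ) + 2) (2 * (i : ℕ) + 3) (by omega)),
    if_neg (deltaParityNe N (2 * (j : ℕ) + 3) (2 * (i : ℕ) + 2) (by omega)),
    if_neg (deltaParityNe N (2 * (j : ℕ) + 4) (2 * (i : ℕ) + 1) (by omega)),
    if_neg (deltaParityNe N (2 * (j : ℕ) + 4) (2 * (i : ℕ) + 3) (by omega))]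
  have hAC : ((2 * (j : ℕ) + 2 : ℕ) : ZMod (2 * N)) = ((2 * (i : ℕ) + 2 : ℕ) : ZMod (2 * N)) ↔
      ((2 * (j : ℕ) + 3 : ℕ) : ZMod (2 * N)) = ((2 * (i : ℕ) + 3 : ℕ) : ZMod (2 * N)) := by
    constructor <;> intro h <;> push_cast at h ⊢ <;> linear_combination h
  have hBD : ((2 * (j : ℕ) + 3 : ℕ) : ZMod (2 * N)) = ((2 * (i : ℕ) + 1 : ℕ) : ZMod (2 * N)) ↔
      ((2 * (j : ℕ) + 4 : ℕ) : ZMod (2 * N)) = ((2 * (i : ℕ) + 2 : ℕ) : ZMod (2 * N)) := by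
    constructor <;> intro h <;> push_cast at h ⊢ <;> linear_combination h
  by_cases hA : ((2 * (j : ℕ) + 2 : ℕ) : ZMod (2 * N)) = ((2 * (i : ℕ) + 2 : ℕ) : ZMod (2 * N)) <;>
    by_cases hB : ((2 * (j : ℕ) + 3 : ℕ) : ZMod (2 * N)) = ((2 * (i : ℕ) + 1 : ℕ) : ZMod (2 * N))
  · rw [if_pos hA, if_pos hB, if_pos (hAC.mp hA), if_pos (hBD.mp hB)]; ring
  · rw [if_pos hA, if_neg hB, if_pos (hAC.mp hA), if_neg (fun hc => hB (hBD.mpr hc))]; ring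
  · rw [if_neg hA, if_pos hB, if_neg (fun hc => hA (hAC.mpr hc)), if_pos (hBD.mp hB)]; ring
  · rw [if_neg hA, if_neg hB, if_neg (fun hc => hA (hAC.mpr hc)),
      if_neg (fun hc => hB (hBD.mpr hc))]; ring

/-- The odd slots of distinct valley vectors are distinct. -/
lemma deltaOddSlot (N : ℕ) [NeZero (2 * N)] (i i' : Fin N) :
    ((2 * (i : ℕ) + 3 : ℕ) : ZMod (2 * N)) = ((2 * (i' : ℕ) + 3 : ℕ) : ZMod (2 * N)) ↔ i = i' := by
  constructor
  · intro h
    rw [ZMod.natCast_eq_natCast_iff] at h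
    have hd := h.dvd
    have hi := i.isLt
    have hi' := i'.isLt
    have h0 : ((2 * (i' : ℕ) + 3 : ℤ) - (2 * (i : ℕ) + 3)) = 0 := by
      refine Int.eq_zero_of_abs_lt_dvd (by exact_mod_cast hd) ?_
      rw [abs_lt]
      constructor <;> push_cast <;> omega
    have : (i : ℕ) = (i' : ℕ) := by omega
    exact Fin.ext this
  · rintro rfl; rfl

/-- The delta-chain single-particle Hamiltonian annihilates each valley vector
`v_j`, the `v_j` are linearly independent, and hence the zero-energy eigenspace
has dimension at least `N`. -/
theorem delta_chain_zero_modes (N : ℕ) [NeZero (2 * N)] (hN : 2 ≤ N) :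
    (∀ j : Fin N, (deltaChainMatrix N).mulVec (deltaV N j) = 0) ∧
    LinearIndependent ℝ (deltaV N) ∧
    N ≤ Module.finrank ℝ (LinearMap.ker (deltaChainMatrix N).mulVecLin) := by
  classical
  have h1 : ∀ j : Fin N, (deltaChainMatrix N).mulVec (deltaV N j) = 0 := by
    intro j
    funext s
    simp only [deltaChainMatrix, mulVec, dotProduct, Matrix.sum_apply, vecMulVec_apply,
      Finset.sum_mul, Pi.zero_apply]
    rw [Finset.sum_comm]
    refine Finset.sum_eq_zero fun k _ => ?_
    have : ∑ t, deltaW N k s * deltaW N k t * deltaV N j t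
        = deltaW N k s * (deltaW N k ⬝ᵥ deltaV N j) := by
      rw [dotProduct, Finset.mul_sum]
      exact Finset.sum_congr rfl fun t _ => by ring
    rw [this, deltaDotZero, mul_zero]
  have h2 : LinearIndependent ℝ (deltaV N) := by
    rw [Fintype.linearIndependent_iff]
    intro g hg i
    have := congrFun hg ((2 * (i : ℕ) + 3 : ℕ) : ZMod (2 * N))
    simp only [Finset.sum_apply, Pi.smul_apply, Pi.zero_apply, smul_eq_mul, deltaV] at this
    have heval : ∀ i' : Fin N,
        g i' * ((if ((2 * (i : ℕ) + 3 : ℕ) : ZMod (2 * N)) = ((2 * (i' : ℕ) + 2 : ℕ) : ZMod (2 * N)) then (1:ℝ) else 0)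
          + (if ((2 * (i : ℕ) + 3 : ℕ) : ZMod (2 * N)) = ((2 * (i' : ℕ) + 3 : ℕ) : ZMod (2 * N)) then -Real.sqrt 2 else 0)
          + (if ((2 * (i : ℕ) + 3 : ℕ) : ZMod (2 * N)) = ((2 * (i' : ℕ) + 4 : ℕ) : ZMod (2 * N)) then 1 else 0))
        = if i = i' then g i' * (-Real.sqrt 2) else 0 := by
      intro i'
      rw [if_neg (deltaParityNe N (2 * (i : ℕ) + 3) (2 * (i' : ℕ) + 2) (by omega)),
        if_neg (deltaParityNe N (2 * (i : ℕ) + 3) (2 * (i' : ℕ) + 4) (by omega))]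
      by_cases h : i = i'
      · rw [if_pos ((deltaOddSlot N i i').mpr h), if_pos h]; ring
      · rw [if_neg (fun hc => h ((deltaOddSlot N i i').mp hc)), if_neg h]; ring
    rw [Finset.sum_congr rfl fun i' _ => heval i'] at this
    rw [Finset.sum_ite_eq, if_pos (Finset.mem_univ i)] at this
    have hs : Real.sqrt 2 ≠ 0 := by positivity
    have := mul_eq_zero.mp this
    rcases this with h | h
    · exact h
    · exact absurd (neg_eq_zero.mp h) hs
  refine ⟨h1, h2, ?_⟩
  have hker : ∀ j : Fin N, deltaV N j ∈ LinearMap.ker (deltaChainMatrix N).mulVecLin := by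
    intro j
    rw [LinearMap.mem_ker, Matrix.mulVecLin_apply]
    exact h1 j
  let f : Fin N → LinearMap.ker (deltaChainMatrix N).mulVecLin := fun j => ⟨deltaV N j, hker j⟩
  have hf : LinearIndependent ℝ f := by
    apply LinearIndependent.of_comp (LinearMap.ker (deltaChainMatrix N).mulVecLin).subtype
    exact h2
  simpa using hf.fintype_card_le_finrank
end

section
/- Let M be the 2N×2N positive-semidefinite matrix M = Σ_{j=1}^{N} w_j w_j* with w_j having entries 1, √2, 1 at cyclic positions 2j-1, 2j, 2j+1. Then the kernel of M has dimension exactly N, i.e., the delta-chain single-particle flat band at zero energy has exactly N states. -/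
open Matrix

lemma aux_mod_cancel {n a b : ℕ} (ha : 0 < a) (ha2 : a ≤ n) (hb : 0 < b) (hb2 : b ≤ n)
    (h : a % n = b % n) : a = b := by
  rcases eq_or_lt_of_le ha2 with rfl | ha2
  · rcases eq_or_lt_of_le hb2 with rfl | hb2
    · rfl
    · rw [Nat.mod_self, Nat.mod_eq_of_lt hb2] at h; omega
  · rcases eq_or_lt_of_le hb2 with rfl | hb2
    · rw [Nat.mod_self, Nat.mod_eq_of_lt ha2] at h; omega
    · rwa [Nat.mod_eq_of_lt ha2, Nat.mod_eq_of_lt hb2] at h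

lemma aux_parity_ne {N a b : ℕ} [NeZero (2 * N)] (h : a % 2 ≠ b % 2) :
    ((a : ZMod (2 * N)) ≠ (b : ZMod (2 * N))) := by
  intro he
  rw [ZMod.natCast_eq_natCast_iff'] at he
  have h2 : a % (2 * N) % 2 = b % (2 * N) % 2 := by rw [he]
  rw [Nat.mod_mod_of_dvd _ ⟨N, rfl⟩, Nat.mod_mod_of_dvd _ ⟨N, rfl⟩] at h2
  exact h h2

lemma deltaW_eval (N : ℕ) [NeZero (2 * N)] (j i : Fin N) :
    deltaW N j (((2 * (i : ℕ) + 2 : ℕ)) : ZMod (2 * N)) =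
      if j = i then Real.sqrt 2 else 0 := by
  have hi : (i : ℕ) < N := i.isLt
  have hj : (j : ℕ) < N := j.isLt
  have h1 : ((2 * (i : ℕ) + 2 : ℕ) : ZMod (2 * N)) ≠ ((2 * (j : ℕ) + 1 : ℕ) : ZMod (2 * N)) :=
    aux_parity_ne (by omega)
  have h3 : ((2 * (i : ℕ) + 2 : ℕ) : ZMod (2 * N)) ≠ ((2 * (j : ℕ) + 3 : ℕ) : ZMod (2 * N)) :=
    aux_parity_ne (by omega)
  have h2 : (((2 * (i : ℕ) + 2 : ℕ) : ZMod (2 * N)) = ((2 * (j : ℕ) + 2 : ℕ) : ZMod (2 * N)))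
      ↔ j = i := by
    constructor
    · intro he
      rw [ZMod.natCast_eq_natCast_iff'] at he
      have := aux_mod_cancel (by omega) (by omega) (by omega) (by omega) he
      exact (Fin.ext (by omega)).symm
    · rintro rfl; rfl
  unfold deltaW
  rw [if_neg h1, if_neg h3]
  by_cases h : j = i
  · rw [if_pos (h2.mpr h), if_pos h]; ring
  · rw [if_neg (fun he => h (h2.mp he)), if_neg h]; ring

/-- The zero-energy flat band of the delta chain has exactly `N` states: the
kernel of `M = Σ_j w_j w_j*` has dimension exactly `N`. -/
theorem delta_chain_flat_band_dimension (N : ℕ) [NeZero (2 * N)] (hN : 2 ≤ N) :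
    Module.finrank ℝ (LinearMap.ker (deltaChainMatrix N).mulVecLin) = N := by
  set W : Matrix (Fin N) (ZMod (2 * N)) ℝ := Matrix.of (fun j s => deltaW N j s) with hW
  have hM : deltaChainMatrix N = Wᴴ * W := by
    ext s t
    simp [deltaChainMatrix, Matrix.sum_apply, Matrix.mul_apply, Matrix.vecMulVec_apply,
      Matrix.conjTranspose_apply, hW]
  -- injectivity of Wᵀ.mulVecLin
  have hinj : Function.Injective (Wᵀ.mulVecLin) := by
    rw [← LinearMap.ker_eq_bot, LinearMap.ker_eq_bot']
    intro c hc
    funext i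
    have h := congrFun hc ((2 * (i : ℕ) + 2 : ℕ) : ZMod (2 * N))
    simp only [mulVecLin_apply, mulVec, dotProduct, transpose_apply, hW, Matrix.of_apply,
      Pi.zero_apply] at h
    rw [Finset.sum_congr rfl (fun j _ => by rw [deltaW_eval N j i])] at h
    simp only [ite_mul, zero_mul, Finset.sum_ite_eq', Finset.mem_univ, if_true] at h
    have hs : Real.sqrt 2 ≠ 0 := by positivity
    have h' : Real.sqrt 2 * c i = 0 := by linarith [h]
    rcases mul_eq_zero.mp h' with h'' | h''
    · exact absurd h'' hs
    · exact h''
  have hrank : W.rank = N := by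
    rw [← Matrix.rank_transpose, Matrix.rank]
    rw [LinearMap.finrank_range_of_inj hinj]
    simp
  have hker := LinearMap.finrank_range_add_finrank_ker W.mulVecLin
  rw [hM, Matrix.ker_mulVecLin_conjTranspose_mul_self]
  have hcard : Module.finrank ℝ (ZMod (2 * N) → ℝ) = 2 * N := by
    simp [Module.finrank_pi, ZMod.card]
  rw [hcard] at hker
  have : Module.finrank ℝ ↥(LinearMap.range W.mulVecLin) = N := by
    rw [← Matrix.rank]; exact hrank
  omega
end

section
/- Let the fictitious-lattice Hamiltonian matrix of M hard-core bosons on a connected finite lattice Λ with nonnegative hopping amplitudes t_{jk} ≥ 0 (not all zero, with the nonzero hoppings connecting Λ) be K^B_{ab} in the occupation-number basis, with a constant C added so all entries are nonnegative and diagonal entries positive. Then K^B is an irreducible nonnegative matrix, provided 1 ≤ M ≤ N - 1 where N = |Λ|. -/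
open Matrix

/-- Irreducibility of the fictitious-lattice matrix of `M` hard-core bosons on
a connected lattice of `N` sites with nonnegative hoppings: if `K^B` is the
nonnegative matrix (in the occupation-number basis, with a constant added so
that diagonal entries are positive) whose off-diagonal positive entries connect
configurations differing by a single hop along an edge with `t_{jk} > 0`, and
the graph of positive hoppings is connected, then for `1 ≤ M ≤ N - 1` the
matrix `K^B` is irreducible: some power has a positive `(a,b)` entry for every
pair of configurations `a, b`. -/
theorem hard_core_boson_matrix_irreducible
    (N M : ℕ) (hM1 : 1 ≤ M) (hMN : M < N)
    (t : Fin N → Fin N → ℝ) (htnonneg : ∀ j k, 0 ≤ t j k)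
    (hconn : ∀ j k : Fin N,
      Relation.ReflTransGen (fun x y => 0 < t x y ∨ 0 < t y x) j k)
    (K : Matrix {s : Finset (Fin N) // s.card = M}
               {s : Finset (Fin N) // s.card = M} ℝ)
    (hKnonneg : ∀ a b, 0 ≤ K a b)
    (hKdiag : ∀ a, 0 < K a a)
    (hKpos : ∀ a b : {s : Finset (Fin N) // s.card = M}, a ≠ b →
      (0 < K a b ↔ ∃ j k : Fin N, (0 < t j k ∨ 0 < t k j) ∧
        k ∈ a.1 ∧ j ∉ a.1 ∧ b.1 = insert j (a.1.erase k))) :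
    ∀ a b, ∃ p : ℕ, 0 < (K ^ p) a b := by
  classical
  -- adjacency of sites
  set adj : Fin N → Fin N → Prop := fun x y => 0 < t x y ∨ 0 < t y x with hadj
  -- single-hop step relation on finsets
  set Step : Finset (Fin N) → Finset (Fin N) → Prop := fun s s' =>
    ∃ j k : Fin N, adj j k ∧ k ∈ s ∧ j ∉ s ∧ s' = insert j (s.erase k) with hStep
  -- a step preserves positive cardinality
  have stepCard : ∀ s s', Step s s' → s'.card = s.card := by
    rintro s s' ⟨j, k, -, hk, hj, rfl⟩
    have hj' : j ∉ s.erase k := fun h => hj (Finset.mem_of_mem_erase h)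
    rw [Finset.card_insert_of_notMem hj', Finset.card_erase_of_mem hk]
    have : 1 ≤ s.card := Finset.card_pos.mpr ⟨k, hk⟩
    omega
  -- moving one token along a path
  have lemB : ∀ u v : Fin N, Relation.ReflTransGen adj u v →
      ∀ s : Finset (Fin N), u ∈ s → v ∉ s →
        Relation.ReflTransGen Step s (insert v (s.erase u)) := by
    intro u v hpath
    induction hpath using Relation.ReflTransGen.head_induction_on with
    | refl => intro s hu hv; exact absurd hu hv
    | head huc hcv IH =>
      rename_i u' c
      intro s hu hv
      by_cases huv : u' = v
      · subst huv; exact absurd hu hv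
      by_cases hc : c ∈ s
      · by_cases huc' : u' = c
        · subst huc'; exact IH s hc hv
        · have h1 := IH s hc hv
          have hcv' : c ≠ v := fun h => hv (h ▸ hc)
          set c1 := insert v (s.erase c) with hc1
          have hu1 : u' ∈ c1 := Finset.mem_insert_of_mem (Finset.mem_erase.mpr ⟨huc', hu⟩)
          have hcnot : c ∉ c1 := by
            simp [hc1, Finset.mem_insert, Finset.mem_erase, hcv']
          have hstep : Step c1 (insert c (c1.erase u')) := ⟨c, u', Or.symm huc, hu1, hcnot, rfl⟩
          have heq : insert c (c1.erase u') = insert v (s.erase u') := by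
            ext z
            simp only [hc1, Finset.mem_insert, Finset.mem_erase]
            constructor
            · rintro (rfl | ⟨hzu, (rfl | ⟨hzc, hzs⟩)⟩)
              · exact Or.inr ⟨fun h => huc' h.symm, hc⟩
              · exact Or.inl rfl
              · exact Or.inr ⟨hzu, hzs⟩
            · rintro (rfl | ⟨hzu, hzs⟩)
              · exact Or.inr ⟨fun h => huv h.symm, Or.inl rfl⟩
              · by_cases hzc : z = c
                · exact Or.inl hzc
                · exact Or.inr ⟨hzu, Or.inr ⟨hzc, hzs⟩⟩
          exact h1.trans (heq ▸ Relation.ReflTransGen.single hstep)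
      · -- c ∉ s : first hop u' → c, then continue
        have hstep : Step s (insert c (s.erase u')) := ⟨c, u', Or.symm huc, hu, hc, rfl⟩
        by_cases hcv' : c = v
        · subst hcv'; exact Relation.ReflTransGen.single hstep
        · set c2 := insert c (s.erase u') with hc2
          have hc2mem : c ∈ c2 := Finset.mem_insert_self _ _
          have hvnot : v ∉ c2 := by
            simp only [hc2, Finset.mem_insert, Finset.mem_erase]
            rintro (rfl | ⟨-, hvs⟩)
            · exact hcv' rfl
            · exact hv hvs
          have h2 := IH c2 hc2mem hvnot
          have heq : insert v (c2.erase c) = insert v (s.erase u') := by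
            have : c ∉ s.erase u' := fun h => hc (Finset.mem_of_mem_erase h)
            rw [hc2, Finset.erase_insert this]
          exact (Relation.ReflTransGen.single hstep).trans (heq ▸ h2)
  -- connectivity of configurations
  have main : ∀ n (s s' : Finset (Fin N)), s.card = M → s'.card = M →
      (s \ s').card = n → Relation.ReflTransGen Step s s' := by
    intro n
    induction n using Nat.strong_induction_on with
    | _ n ih =>
      intro s s' hs hs' hn
      by_cases h : s = s'
      · subst h; exact Relation.ReflTransGen.refl
      · have hne : (s \ s').Nonempty := by
          rw [Finset.sdiff_nonempty]
          intro hsub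
          exact h (Finset.eq_of_subset_of_card_le hsub (by omega))
        have hne' : (s' \ s).Nonempty := by
          rw [Finset.sdiff_nonempty]
          intro hsub
          exact h (Finset.eq_of_subset_of_card_le hsub (by omega)).symm
        obtain ⟨x, hx⟩ := hne
        obtain ⟨y, hy⟩ := hne'
        have hxs : x ∈ s := (Finset.mem_sdiff.mp hx).1
        have hxs' : x ∉ s' := (Finset.mem_sdiff.mp hx).2
        have hys' : y ∈ s' := (Finset.mem_sdiff.mp hy).1
        have hys : y ∉ s := (Finset.mem_sdiff.mp hy).2
        have h1 := lemB x y (hconn x y) s hxs hys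
        set c := insert y (s.erase x) with hcdef
        have hccard : c.card = M := by
          have : y ∉ s.erase x := fun hh => hys (Finset.mem_of_mem_erase hh)
          rw [hcdef, Finset.card_insert_of_notMem this, Finset.card_erase_of_mem hxs, hs]
          omega
        have hsd : c \ s' = (s \ s').erase x := by
          ext z
          simp only [hcdef, Finset.mem_sdiff, Finset.mem_insert, Finset.mem_erase]
          constructor
          · rintro ⟨(rfl | ⟨hzx, hzs⟩), hzs'⟩
            · exact absurd hys' hzs'
            · exact ⟨hzx, hzs, hzs'⟩
          · rintro ⟨hzx, hzs, hzs'⟩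
            exact ⟨Or.inr ⟨hzx, hzs⟩, hzs'⟩
        have hcard : (c \ s').card < n := by
          rw [hsd, Finset.card_erase_of_mem hx, hn]
          have : 0 < n := hn ▸ Finset.card_pos.mpr ⟨x, hx⟩
          omega
        exact h1.trans (ih _ hcard c s' hccard hs' rfl)
  -- nonnegativity of powers
  have hpownn : ∀ p (a b : {s : Finset (Fin N) // s.card = M}), 0 ≤ (K ^ p) a b := by
    intro p
    induction p with
    | zero =>
      intro a b
      by_cases h : a = b
      · subst h; simp [Matrix.one_apply]
      · simp [Matrix.one_apply, h]
    | succ p IH =>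
      intro a b
      rw [pow_succ, Matrix.mul_apply]
      exact Finset.sum_nonneg fun c _ => mul_nonneg (IH a c) (hKnonneg c b)
  -- reachability implies positive power entry
  have convert : ∀ s s', Relation.ReflTransGen Step s s' →
      ∀ (hs : s.card = M) (hs' : s'.card = M),
        ∃ p, 0 < (K ^ p) ⟨s, hs⟩ ⟨s', hs'⟩ := by
    intro s s' hreach
    induction hreach with
    | refl =>
      intro hs hs'
      exact ⟨0, by simp [Matrix.one_apply]⟩
    | @tail c s2 hsc hcs2 IH =>
      intro hs hs2
      have hccard : c.card = M := by rw [← stepCard c s2 hcs2, hs2]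
      obtain ⟨p, hp⟩ := IH hs hccard
      obtain ⟨j, k, hadjjk, hk, hj, hset⟩ := hcs2
      have hne : (⟨c, hccard⟩ : {s : Finset (Fin N) // s.card = M}) ≠ ⟨s2, hs2⟩ := by
        intro h
        have : c = s2 := congrArg Subtype.val h
        rw [this] at hj
        exact hj (hset ▸ Finset.mem_insert_self j _)
      have hKcs : 0 < K ⟨c, hccard⟩ ⟨s2, hs2⟩ :=
        (hKpos _ _ hne).mpr ⟨j, k, hadjjk, hk, hj, hset⟩
      refine ⟨p + 1, ?_⟩
      rw [pow_succ, Matrix.mul_apply]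
      have hterm : 0 < (K ^ p) ⟨s, hs⟩ ⟨c, hccard⟩ * K ⟨c, hccard⟩ ⟨s2, hs2⟩ :=
        mul_pos hp hKcs
      exact Finset.sum_pos' (fun d _ => mul_nonneg (hpownn p _ _) (hKnonneg _ _))
        ⟨⟨c, hccard⟩, Finset.mem_univ _, hterm⟩
  intro a b
  have := convert a.1 b.1 (main _ a.1 b.1 a.2 b.2 rfl) a.2 b.2
  simpa using this
end
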